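/- Along any radially reduced future-directed null geodesic in the Schwarzschild exterior of mass M, the rescaled weight Ω·φ_+ satisfies d/ds (Ω φ_+) = 𝐚(r, p_{r*}, p_t)·Ω φ_+, where 𝐚(r, p_{r*}, p_t) := ((r² + 2Mr + 3M²)·E)/(r·(r+6M)^{1/2}·(r^{3/2} + M(r+6M)^{1/2})) + 2M·|p_u|/(r²Ω²). -/

import Mathlib

open Real

/-- The trapping weight `φ₊ = (r/Ω)·p_{r*} − (r/Ω)·(1+6M/r)^{1/2}·(1−3M/r)·p_t`,
with `p_t = −E` and `Ω = (1 − 2M/r)^{1/2}`. -/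
noncomputable def phiPlus (M E rv pv : ℝ) : ℝ :=
  rv / Real.sqrt (1 - 2 * M / rv) * pv
    - rv / Real.sqrt (1 - 2 * M / rv) * Real.sqrt (1 + 6 * M / rv) * (1 - 3 * M / rv) * (-E)

/-- The coefficient `𝐚(r, p_{r*}, p_t)`, with `|p_u| = (E + p_{r*})/2`. -/
noncomputable def aBold (M E rv pv : ℝ) : ℝ :=
  (rv ^ 2 + 2 * M * rv + 3 * M ^ 2) * E
      / (rv * Real.sqrt (rv + 6 * M) * (rv * Real.sqrt rv + M * Real.sqrt (rv + 6 * M)))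
    + 2 * M * ((E + pv) / 2) / (rv ^ 2 * (1 - 2 * M / rv))

/-!
Since `Ω · (r/Ω) = r`, the rescaled weight is `Ωφ₊ = r p_{r*} + E F(r)` with
`F(r) = (r - 3M) √(r + 6M) / √r`, and `F'(r) = (r² + 3Mr + 9M²) / (r √r √(r + 6M))`.
Along the geodesic its derivative is `p_{r*}² + (r - 3M) ℓ² / r³ + E F'(r) p_{r*}`, and the
null-shell relation turns `ℓ²/r³` into `(E² - p_{r*}²)/(r - 2M)`. What remains is a rational
identity in `√r` and `√(r + 6M)`; eliminating `M = ((√(r + 6M))² - (√r)²)/6` makes the two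
square roots independent variables, so it is checked by `ring`.
-/

noncomputable def trappingFactor (M r : ℝ) : ℝ := (r - 3 * M) * √(r + 6 * M) / √r

lemma sqrt_mul_phiPlus {M E r p : ℝ} (hM : 0 < M) (hr : 2 * M < r) :
    √(1 - 2 * M / r) * phiPlus M E r p = r * p + E * trappingFactor M r := by
  have hr0 : 0 < r := by linarith
  have hΩ : 0 < √(1 - 2 * M / r) := sqrt_pos.2 (by rw [sub_pos, div_lt_one hr0]; exact hr)
  have hX : 0 < √r := sqrt_pos.2 hr0
  rw [phiPlus, trappingFactor, one_add_div hr0.ne', sqrt_div' _ hr0.le]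
  generalize √(1 - 2 * M / r) = Ω at *
  field_simp
  ring

lemma hasDerivAt_trappingFactor {M r : ℝ} (hM : 0 ≤ M) (hr : 0 < r) :
    HasDerivAt (trappingFactor M)
      ((r ^ 2 + 3 * M * r + 9 * M ^ 2) / (r * √r * √(r + 6 * M))) r := by
  have hX : 0 < √r := sqrt_pos.2 hr
  have hY : 0 < √(r + 6 * M) := sqrt_pos.2 (by positivity)
  have hY2 : √(r + 6 * M) ^ 2 = r + 6 * M := sq_sqrt (by positivity)
  have hX2 : √r ^ 2 = r := sq_sqrt hr.le
  refine ((((hasDerivAt_id' r).sub_const (3 * M)).fun_mul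
    (((hasDerivAt_id' r).add_const (6 * M)).sqrt (by positivity))).fun_div
      (hasDerivAt_sqrt hr.ne') hX.ne').congr_deriv ?_
  field_simp
  linear_combination
    (r * (2 * √(r + 6 * M) ^ 2 + r - 3 * M) - 2 * (r ^ 2 + 3 * M * r + 9 * M ^ 2)) * hX2
      + r * (r + 3 * M) * hY2

lemma aBold_mul_eq {M E r p : ℝ} (hM : 0 < M) (hr : 2 * M < r) :
    aBold M E r p * (r * p + E * trappingFactor M r)
      = p ^ 2 + (r - 3 * M) * (E ^ 2 - p ^ 2) / (r - 2 * M)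
        + E * ((r ^ 2 + 3 * M * r + 9 * M ^ 2) / (r * √r * √(r + 6 * M)) * p) := by
  obtain ⟨X, hX, rfl⟩ : ∃ X, 0 < X ∧ r = X ^ 2 :=
    ⟨√r, sqrt_pos.2 (by linarith), (sq_sqrt (by linarith)).symm⟩
  have hY2 : √(X ^ 2 + 6 * M) ^ 2 = X ^ 2 + 6 * M := sq_sqrt (by positivity)
  have hY : 0 < √(X ^ 2 + 6 * M) := sqrt_pos.2 (by positivity)
  have hΩ : X ^ 2 - 2 * M ≠ 0 := by linarith
  rw [aBold, trappingFactor, sqrt_sq hX.le, one_sub_div (by positivity)]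
  generalize √(X ^ 2 + 6 * M) = Y at *
  field_simp
  obtain rfl : M = (Y ^ 2 - X ^ 2) / 6 := by linarith
  ring

lemma mul_centrifugal_eq_of_null {M E r p ℓ : ℝ} (hr0 : r ≠ 0) (hΩ : r - 2 * M ≠ 0)
    (hnull : E ^ 2 = p ^ 2 + (1 - 2 * M / r) * ℓ ^ 2 / r ^ 2) :
    r * ((r - 3 * M) / r ^ 4 * ℓ ^ 2) = (r - 3 * M) * (E ^ 2 - p ^ 2) / (r - 2 * M) := by
  rw [eq_div_iff hΩ, hnull, one_sub_div hr0]
  field_simp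
  ring

theorem schwarzschild_Omega_phiPlus_derivative_general
    (M : ℝ) (hM : 0 < M)
    (I : Set ℝ)
    (r prs : ℝ → ℝ) (E ℓ : ℝ)
    (hr2M : ∀ s ∈ I, 2 * M < r s)
    (hdr : ∀ s ∈ I, HasDerivWithinAt r (prs s) I s)
    (hdp : ∀ s ∈ I, HasDerivWithinAt prs ((r s - 3 * M) / (r s) ^ 4 * ℓ ^ 2) I s)
    (hnull : ∀ s ∈ I, E ^ 2 = (prs s) ^ 2 + (1 - 2 * M / r s) * ℓ ^ 2 / (r s) ^ 2) :
    ∀ s ∈ I,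
      HasDerivWithinAt (fun u => Real.sqrt (1 - 2 * M / r u) * phiPlus M E (r u) (prs u))
        (aBold M E (r s) (prs s)
          * (Real.sqrt (1 - 2 * M / r s) * phiPlus M E (r s) (prs s))) I s := by
  intro s hs
  have hr0 : 0 < r s := by linarith [hr2M s hs]
  have hΩφ : ∀ u ∈ I, √(1 - 2 * M / r u) * phiPlus M E (r u) (prs u)
      = r u * prs u + E * trappingFactor M (r u) :=
    fun u hu => sqrt_mul_phiPlus hM (hr2M u hu)
  have hderiv := ((hdr s hs).mul (hdp s hs)).add
    (((hasDerivAt_trappingFactor hM.le hr0).comp_hasDerivWithinAt s (hdr s hs)).const_mul E)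
  rw [hΩφ s hs, aBold_mul_eq hM (hr2M s hs)]
  refine (hderiv.congr hΩφ (hΩφ s hs)).congr_deriv ?_
  rw [mul_centrifugal_eq_of_null hr0.ne' (by linarith [hr2M s hs]) (hnull s hs)]
  ring

/-- along any radially reduced future-directed null geodesic, the rescaled
weight `Ω·φ₊` satisfies `d/ds (Ωφ₊) = 𝐚(r, p_{r*}, p_t)·Ωφ₊`. -/
theorem schwarzschild_Omega_phiPlus_derivative
    (M : ℝ) (hM : 0 < M)
    (I : Set ℝ) (hI : I.OrdConnected)
    (r prs : ℝ → ℝ) (E ℓ : ℝ) (hE : 0 < E) (hl : 0 ≤ ℓ)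
    (hr2M : ∀ s ∈ I, 2 * M < r s)
    (hdr : ∀ s ∈ I, HasDerivWithinAt r (prs s) I s)
    (hdp : ∀ s ∈ I, HasDerivWithinAt prs ((r s - 3 * M) / (r s) ^ 4 * ℓ ^ 2) I s)
    (hnull : ∀ s ∈ I, E ^ 2 = (prs s) ^ 2 + (1 - 2 * M / r s) * ℓ ^ 2 / (r s) ^ 2) :
    ∀ s ∈ I,
      HasDerivWithinAt (fun u => Real.sqrt (1 - 2 * M / r u) * phiPlus M E (r u) (prs u))
        (aBold M E (r s) (prs s)
          * (Real.sqrt (1 - 2 * M / r s) * phiPlus M E (r s) (prs s))) I s :=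
  schwarzschild_Omega_phiPlus_derivative_general M hM I r prs E ℓ hr2M hdr hdp hnull
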